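/- Let μ be the product probability measure on Ω = ℕ → Bool whose coordinates are independent fair coin flips, and let v : Ω → ℕ → Bool be predictable. Define the random round number of the first match, T ω = 1 + inf {k ∈ ℕ | ω k = v ω k} (rounds numbered starting from 1). Then T is μ-almost everywhere finite and its expectation is ∫ T dμ = 2. (This is the expectation of the stage in which the processors' common estimate coincides with the common coin, Stage II in the paper's expected-termination analysis.) -/

import Mathlib

open MeasureTheory

/-- `μ` is the product probability measure on `Ω = ℕ → Bool` whose coordinates are
independent fair coin flips: every cylinder event fixing the coins on a finite set `s`
of rounds has probability `(1/2)^|s|`.  (Taking `s = ∅` shows `μ` is a probability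
measure, and these cylinder probabilities uniquely determine the product measure.) -/
def IsFairCoinSeq (μ : Measure (ℕ → Bool)) : Prop :=
  ∀ (s : Finset ℕ) (f : ℕ → Bool),
    μ {ω | ∀ k ∈ s, ω k = f k} = (1 / 2 : ENNReal) ^ s.card

/-- `v` is predictable: the round-`k` target depends only on the coins of earlier
rounds. -/
def Predictable (v : (ℕ → Bool) → ℕ → Bool) : Prop :=
  ∀ ω ω' k, (∀ j < k, ω j = ω' j) → v ω k = v ω' k

/-- The round number (rounds counted from `1`) of the first round whose coin equals
its target. -/
noncomputable def firstMatchRound (v : (ℕ → Bool) → ℕ → Bool) (ω : ℕ → Bool) : ℕ :=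
  1 + sInf {k : ℕ | ω k = v ω k}

/-!
Predictability singles out one coin sequence `avoidingSeq v` that never meets its target, and
having no match in rounds `< k` says exactly that the first `k` coins agree with it, an event of
probability `2⁻ᵏ`. So never matching is a null event, and by the tail-sum formula the expected
number of rounds before the first match is `∑ₖ 2⁻⁽ᵏ⁺¹⁾ = 1`.
-/

open ENNReal

/-- Each coin negates the target computed from the preceding coins; the later coins are set to
`false`, which predictability makes irrelevant. -/
def avoidingSeq (v : (ℕ → Bool) → ℕ → Bool) : ℕ → Bool
  | k => !v (fun j => if _ : j < k then avoidingSeq v j else false) k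
  termination_by k => k

noncomputable def firstMatchIndex (v : (ℕ → Bool) → ℕ → Bool) (ω : ℕ → Bool) : ℕ :=
  sInf {k : ℕ | ω k = v ω k}

theorem lintegral_natCast_eq_tsum_measure_lt {Ω : Type*} [MeasurableSpace Ω] (μ : Measure Ω)
    {f : Ω → ℕ} (hf : Measurable f) :
    ∫⁻ ω, (f ω : ℝ≥0∞) ∂μ = ∑' k : ℕ, μ {ω | k < f ω} := by
  have hcount (ω : Ω) : (f ω : ℝ≥0∞) = ∑' k : ℕ, {ω | k < f ω}.indicator 1 ω := by
    rw [tsum_eq_sum (s := Finset.range (f ω)) (by simp), Finset.sum_congr rfl fun k hk =>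
      Set.indicator_of_mem (s := {ω | k < f ω}) (Finset.mem_range.1 hk) 1]
    simp
  have hmeas (k : ℕ) : MeasurableSet {ω | k < f ω} := measurableSet_lt measurable_const hf
  simp_rw [hcount, lintegral_tsum fun k => (measurable_one.indicator (hmeas k)).aemeasurable,
    lintegral_indicator_one (hmeas _)]

theorem measurableSet_setOf_forall_lt_eq (f : ℕ → Bool) (k : ℕ) :
    MeasurableSet {ω : ℕ → Bool | ∀ j < k, ω j = f j} := by
  measurability

namespace Predictable

variable {v : (ℕ → Bool) → ℕ → Bool}

theorem apply_eq_not_avoidingSeq (hv : Predictable v) {ω : ℕ → Bool} {k : ℕ}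
    (h : ∀ j < k, ω j = avoidingSeq v j) : v ω k = !avoidingSeq v k := by
  rw [avoidingSeq, Bool.not_not]
  exact hv _ _ k fun j hj => by simp [hj, h j hj]

theorem forall_lt_ne_iff (hv : Predictable v) (ω : ℕ → Bool) (k : ℕ) :
    (∀ j < k, ω j ≠ v ω j) ↔ ∀ j < k, ω j = avoidingSeq v j := by
  induction k with
  | zero => simp
  | succ k ih =>
    simp only [Nat.forall_lt_succ_right, ih]
    refine and_congr_right fun hprefix => ?_
    rw [hv.apply_eq_not_avoidingSeq hprefix, Bool.ne_not]

theorem forall_ne_iff (hv : Predictable v) (ω : ℕ → Bool) :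
    (∀ j, ω j ≠ v ω j) ↔ ω = avoidingSeq v := by
  rw [funext_iff]
  exact ⟨fun h j => (hv.forall_lt_ne_iff ω (j + 1)).1 (fun i _ => h i) j j.lt_succ_self,
    fun h j => (hv.forall_lt_ne_iff ω (j + 1)).2 (fun i _ => h i) j j.lt_succ_self⟩

/-- The point `avoidingSeq v` is removed because there `firstMatchIndex` is `sInf ∅ = 0`. -/
theorem setOf_lt_firstMatchIndex (hv : Predictable v) (k : ℕ) :
    {ω | k < firstMatchIndex v ω} =
      {ω | ∀ j < k + 1, ω j = avoidingSeq v j} \ {avoidingSeq v} := by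
  ext ω
  by_cases hω : ω = avoidingSeq v
  · subst hω
    have hnone : {j | avoidingSeq v j = v (avoidingSeq v) j} = ∅ :=
      Set.eq_empty_of_forall_notMem ((hv.forall_ne_iff _).2 rfl)
    simp [firstMatchIndex, hnone]
  · have hmatch : ∃ j, ω j = v ω j := by
      by_contra! h
      exact hω ((hv.forall_ne_iff ω).1 h)
    change k < sInf _ ↔ (∀ j < k + 1, _) ∧ ω ≠ avoidingSeq v
    rw [← hv.forall_lt_ne_iff, and_iff_left hω]
    exact ⟨fun h j hj hjm => ((Nat.lt_succ_iff.1 hj).trans_lt h).not_ge (Nat.sInf_le hjm),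
      fun h => not_le.1 fun hle => h _ (Nat.lt_succ_of_le hle) (Nat.sInf_mem hmatch)⟩

theorem measurable_firstMatchIndex (hv : Predictable v) : Measurable (firstMatchIndex v) :=
  measurable_of_Ioi fun k => by
    change MeasurableSet {ω | k < firstMatchIndex v ω}
    rw [hv.setOf_lt_firstMatchIndex k]
    exact (measurableSet_setOf_forall_lt_eq _ _).diff (measurableSet_singleton _)

theorem measurable_firstMatchRound (hv : Predictable v) :
    Measurable fun ω => (firstMatchRound v ω : ℝ) :=
  measurable_from_top.comp (measurable_const.add hv.measurable_firstMatchIndex)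

end Predictable

namespace IsFairCoinSeq

variable {μ : Measure (ℕ → Bool)}

theorem isProbabilityMeasure (hμ : IsFairCoinSeq μ) : IsProbabilityMeasure μ :=
  ⟨by simpa using hμ ∅ fun _ => false⟩

theorem measure_setOf_forall_lt_eq (hμ : IsFairCoinSeq μ) (f : ℕ → Bool) (k : ℕ) :
    μ {ω | ∀ j < k, ω j = f j} = 2⁻¹ ^ k := by
  simpa using hμ (Finset.range k) f

theorem nullSingletonClass (hμ : IsFairCoinSeq μ) : NullSingletonClass μ where
  measure_singleton f := by
    refine le_antisymm (ge_of_tendsto' (ENNReal.tendsto_pow_atTop_nhds_zero_of_lt_one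
      (ENNReal.inv_lt_one.2 one_lt_two)) fun k => ?_) bot_le
    rw [← hμ.measure_setOf_forall_lt_eq f k]
    exact measure_mono fun ω hω j _ => congrFun hω j

variable {v : (ℕ → Bool) → ℕ → Bool}

theorem ae_exists_eq_apply (hμ : IsFairCoinSeq μ) (hv : Predictable v) :
    ∀ᵐ ω ∂μ, ∃ k, ω k = v ω k := by
  have := hμ.nullSingletonClass
  filter_upwards [Measure.ae_ne μ (avoidingSeq v)] with ω hω
  by_contra! h
  exact hω ((hv.forall_ne_iff ω).1 h)

theorem lintegral_firstMatchIndex (hμ : IsFairCoinSeq μ) (hv : Predictable v) :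
    ∫⁻ ω, (firstMatchIndex v ω : ℝ≥0∞) ∂μ = 1 := by
  have := hμ.nullSingletonClass
  have htail (k : ℕ) : μ {ω | k < firstMatchIndex v ω} = 2⁻¹ ^ (k + 1) := by
    rw [hv.setOf_lt_firstMatchIndex, measure_sdiff_null (measure_singleton _),
      hμ.measure_setOf_forall_lt_eq]
  simp_rw [lintegral_natCast_eq_tsum_measure_lt μ hv.measurable_firstMatchIndex, htail,
    ENNReal.tsum_geometric_add_one, ENNReal.one_sub_inv_two, inv_inv]
  exact ENNReal.inv_mul_cancel two_ne_zero ofNat_ne_top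

theorem lintegral_firstMatchRound (hμ : IsFairCoinSeq μ) (hv : Predictable v) :
    ∫⁻ ω, (firstMatchRound v ω : ℝ≥0∞) ∂μ = 2 := by
  have := hμ.isProbabilityMeasure
  change ∫⁻ ω, ((1 + firstMatchIndex v ω : ℕ) : ℝ≥0∞) ∂μ = 2
  push_cast
  rw [lintegral_add_left measurable_const, hμ.lintegral_firstMatchIndex hv, lintegral_const,
    measure_univ, mul_one, one_add_one_eq_two]

end IsFairCoinSeq

/-- The round of the first match is almost surely finite (a matching round almost
surely exists) and its expectation is `2`. -/
theorem firstMatchRound_ae_finite_and_expectation_two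
    (μ : Measure (ℕ → Bool)) (hμ : IsFairCoinSeq μ)
    (v : (ℕ → Bool) → ℕ → Bool) (hv : Predictable v) :
    (∀ᵐ ω ∂μ, ∃ k, ω k = v ω k) ∧
      ∫ ω, (firstMatchRound v ω : ℝ) ∂μ = 2 := by
  refine ⟨hμ.ae_exists_eq_apply hv, ?_⟩
  rw [integral_eq_lintegral_of_nonneg_ae (ae_of_all _ fun _ => by positivity)
    hv.measurable_firstMatchRound.aestronglyMeasurable]
  simp only [ENNReal.ofReal_natCast, hμ.lintegral_firstMatchRound hv, ENNReal.toReal_ofNat]
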